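/- Let C be a closed cone with non-empty interior in a real Banach space X and let f : C → C be a continuous compact order-preserving homogeneous map. If f has an eigenvector in the interior of C, i.e., there exist v in the interior of C and λ ≥ 0 with f(v) = λv, then f has a continuous cone spectral radius. -/

import Mathlib

open Filter Topology Set

noncomputable section

variable {X : Type*} [NormedAddCommGroup X] [NormedSpace ℝ X] [CompleteSpace X]

/-- `C` is a closed cone in `X`: closed, convex, invariant under nonnegative scaling,
and `C ∩ (-C) = {0}`. -/
def IsClosedCone (C : Set X) : Prop :=
  IsClosed C ∧ Convex ℝ C ∧ (∀ a : ℝ, 0 ≤ a → ∀ x ∈ C, a • x ∈ C) ∧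
    ∀ x ∈ C, -x ∈ C → x = 0

/-- The partial order induced by the cone `C`: `x ≤ y` iff `y - x ∈ C`. -/
def coneLE (C : Set X) (x y : X) : Prop := y - x ∈ C

/-- `f` is homogeneous of degree one on `C`. -/
def IsHomog (C : Set X) (f : X → X) : Prop :=
  ∀ a : ℝ, 0 ≤ a → ∀ x ∈ C, f (a • x) = a • f x

/-- `f` is order-preserving on `C` with respect to the cone order. -/
def IsOrdPres (C : Set X) (f : X → X) : Prop :=
  ∀ x ∈ C, ∀ y ∈ C, coneLE C x y → coneLE C (f x) (f y)

/-- `f` is a compact map on `C`: the image of every bounded subset of `C`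
has compact closure. -/
def IsCompactMapOn (C : Set X) (f : X → X) : Prop :=
  ∀ D : Set X, D ⊆ C → Bornology.IsBounded D → IsCompact (closure (f '' D))

/-- The cone sup-norm `‖g‖_C = sup {‖g x‖ : x ∈ C, ‖x‖ ≤ 1}`. -/
def coneNorm (C : Set X) (g : X → X) : ℝ :=
  sSup {r : ℝ | ∃ x ∈ C, ‖x‖ ≤ 1 ∧ r = ‖g x‖}

/-- The cone spectral radius `r_C(f) = sup_{x ∈ C} limsup_k ‖f^k(x)‖^{1/k}`. -/
def coneSpecRad (C : Set X) (f : X → X) : ℝ :=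
  sSup {r : ℝ | ∃ x ∈ C, r = Filter.limsup (fun k : ℕ => ‖f^[k] x‖ ^ ((k : ℝ)⁻¹)) Filter.atTop}

/-- The cone spectrum `σ_C(f) = {ρ ≥ 0 : f x = ρ • x for some x ∈ C, x ≠ 0}`. -/
def coneSpectrum (C : Set X) (f : X → X) : Set ℝ :=
  {ρ : ℝ | 0 ≤ ρ ∧ ∃ x ∈ C, x ≠ 0 ∧ f x = ρ • x}

/-- `f` has a continuous cone spectral radius: for every sequence of continuous compact
order-preserving homogeneous maps `f_k : C → C` with `‖f - f_k‖_C → 0`,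
one has `r_C(f_k) → r_C(f)`. -/
def HasContinuousConeSpecRad (C : Set X) (f : X → X) : Prop :=
  ∀ fk : ℕ → X → X,
    (∀ k, Set.MapsTo (fk k) C C) →
    (∀ k, ContinuousOn (fk k) C) →
    (∀ k, IsCompactMapOn C (fk k)) →
    (∀ k, IsHomog C (fk k)) →
    (∀ k, IsOrdPres C (fk k)) →
    Filter.Tendsto (fun k => coneNorm C (fun x => f x - fk k x)) Filter.atTop (nhds 0) →
    Filter.Tendsto (fun k => coneSpecRad C (fk k)) Filter.atTop (nhds (coneSpecRad C f))

/-!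
An interior point `v` of `C` is an order unit, `y ≤ κ ‖y‖ v`. Hence if `f v = λ v` and
`‖f - f_k‖_C = ε_k → 0`, then `(λ - c ε_k) v ≤ f_k v ≤ (λ + c ε_k) v`, and it suffices to show that
`ν v ≤ g v ≤ μ v` forces `ν ≤ r_C(g) ≤ μ` for every compact order-preserving homogeneous `g`.
The lower bound holds because `ν^n v ≤ g^n v` and the order unit give `‖g^n v‖ ≥ κ⁻¹ ν^n`.
For the upper bound, `g^n x ≤ c μ^n v`; the cone need not be normal, so this order bound is turned
into `‖g^n x‖ = O(β^n)` for all `β > μ` by the compactness of `g`: a limit point `a` of a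
sequence in a compact subset of `C` with `y_n ≤ t_n v`, `t_n → 0`, satisfies `-a ∈ C`, so `a = 0`.
-/

theorem tendsto_mul_pow_rpow_inv {c β : ℝ} (hc : 0 < c) (hβ : 0 ≤ β) :
    Tendsto (fun n : ℕ => (c * β ^ n) ^ (n⁻¹ : ℝ)) atTop (𝓝 β) := by
  have hroot : Tendsto (fun n : ℕ => c ^ (n⁻¹ : ℝ)) atTop (𝓝 1) := by
    simpa using tendsto_const_nhds.rpow tendsto_inv_atTop_nhds_zero_nat (Or.inl hc.ne')
  refine (by simpa using hroot.mul_const β : Tendsto _ _ (𝓝 β)).congr' ?_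
  filter_upwards [eventually_ne_atTop 0] with n hn
  rw [Real.mul_rpow hc.le (by positivity), Real.pow_rpow_inv_natCast hβ hn]

theorem limsup_rpow_inv_le {a : ℕ → ℝ} {B β : ℝ} (ha : ∀ n, 0 ≤ a n) (hB : 0 < B) (hβ : 0 ≤ β)
    (hup : ∀ n, a n ≤ B * β ^ n) : limsup (fun n : ℕ => a n ^ (n⁻¹ : ℝ)) atTop ≤ β := by
  refine (limsup_le_limsup (.of_forall fun n => ?_)
    (isCoboundedUnder_le_of_le atTop fun n => Real.rpow_nonneg (ha n) _)
    (tendsto_mul_pow_rpow_inv hB hβ).isBoundedUnder_le).trans_eq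
    (tendsto_mul_pow_rpow_inv hB hβ).limsup_eq
  exact Real.rpow_le_rpow (ha n) (hup n) (by positivity)

theorem le_limsup_rpow_inv {a : ℕ → ℝ} {b B ν β : ℝ} (hb : 0 < b) (hν : 0 ≤ ν) (hB : 0 < B)
    (hβ : 0 ≤ β) (hlo : ∀ n, b * ν ^ n ≤ a n) (hup : ∀ n, a n ≤ B * β ^ n) :
    ν ≤ limsup (fun n : ℕ => a n ^ (n⁻¹ : ℝ)) atTop := by
  have hbdd : IsBoundedUnder (· ≤ ·) atTop fun n : ℕ => a n ^ (n⁻¹ : ℝ) :=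
    (tendsto_mul_pow_rpow_inv hB hβ).isBoundedUnder_le.mono_le (.of_forall fun n =>
      Real.rpow_le_rpow ((hlo n).trans' (by positivity)) (hup n) (by positivity))
  refine (tendsto_mul_pow_rpow_inv hb hν).limsup_eq.symm.trans_le
    (limsup_le_limsup (.of_forall fun n => ?_)
      (tendsto_mul_pow_rpow_inv hb hν).isCoboundedUnder_le hbdd)
  exact Real.rpow_le_rpow (by positivity) (hlo n) (by positivity)

section

variable {E : Type*} [NormedAddCommGroup E] {C : Set E} {v x y : E}

theorem IsCompactMapOn.exists_norm_le {g : E → E} (hg : IsCompactMapOn C g) :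
    ∃ M, ∀ y ∈ C, ‖y‖ ≤ 1 → ‖g y‖ ≤ M := by
  obtain ⟨M, hM⟩ := (hg (C ∩ Metric.closedBall 0 1) inter_subset_left
    (Metric.isBounded_closedBall.subset inter_subset_right)).isBounded.exists_norm_le
  exact ⟨M, fun y hy hy1 => hM _ (subset_closure ⟨y, ⟨hy, by simpa using hy1⟩, rfl⟩)⟩

theorem norm_sub_le_coneNorm {g h : E → E} (hg : IsCompactMapOn C g) (hh : IsCompactMapOn C h)
    (hy : y ∈ C) (hy1 : ‖y‖ ≤ 1) : ‖g y - h y‖ ≤ coneNorm C (fun x => g x - h x) := by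
  obtain ⟨Mg, hMg⟩ := hg.exists_norm_le
  obtain ⟨Mh, hMh⟩ := hh.exists_norm_le
  refine le_csSup ⟨Mg + Mh, ?_⟩ ⟨y, hy, hy1, rfl⟩
  rintro _ ⟨x, hx, hx1, rfl⟩
  exact (norm_sub_le _ _).trans (add_le_add (hMg x hx hx1) (hMh x hx hx1))

variable [NormedSpace ℝ E]

theorem IsHomog.map_zero {g : E → E} (hg : IsHomog C g) (h0 : (0 : E) ∈ C) : g 0 = 0 := by
  simpa using hg 0 le_rfl 0 h0

namespace IsClosedCone

variable (hC : IsClosedCone C)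
include hC

theorem smul_mem {a : ℝ} (ha : 0 ≤ a) (hx : x ∈ C) : a • x ∈ C :=
  hC.2.2.1 a ha x hx

theorem zero_mem (hx : x ∈ C) : (0 : E) ∈ C := by
  simpa using hC.smul_mem le_rfl hx

theorem add_mem (hx : x ∈ C) (hy : y ∈ C) : x + y ∈ C := by
  have hmid : (2⁻¹ : ℝ) • x + (2⁻¹ : ℝ) • y ∈ C :=
    hC.2.1 hx hy (by norm_num) (by norm_num) (by norm_num)
  simpa [smul_add, smul_smul] using hC.smul_mem zero_le_two hmid

theorem eq_zero_of_neg_mem (hx : x ∈ C) (hnx : -x ∈ C) : x = 0 :=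
  hC.2.2.2 x hx hnx

theorem nonneg_of_smul_mem (hv : v ∈ C) (hv0 : v ≠ 0) {a : ℝ} (ha : a • v ∈ C) : 0 ≤ a := by
  by_contra! ha0
  refine hv0 (hC.eq_zero_of_neg_mem hv ?_)
  simpa [smul_smul, ha0.ne] using hC.smul_mem (inv_nonneg.2 (neg_nonneg.2 ha0.le)) ha

theorem coneLE_trans {z : E} (hxy : coneLE C x y) (hyz : coneLE C y z) : coneLE C x z := by
  simpa [coneLE] using hC.add_mem hyz hxy

theorem coneLE_smul {a : ℝ} (ha : 0 ≤ a) (hxy : coneLE C x y) : coneLE C (a • x) (a • y) := by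
  simpa [coneLE, smul_sub] using hC.smul_mem ha hxy

theorem smul_coneLE_smul (hv : v ∈ C) {a b : ℝ} (hab : a ≤ b) : coneLE C (a • v) (b • v) := by
  simpa [coneLE, sub_smul] using hC.smul_mem (sub_nonneg.2 hab) hv

theorem exists_coneLE_smul_of_mem_interior (hv : v ∈ interior C) :
    ∃ κ, 0 < κ ∧ ∀ y, coneLE C y ((κ * ‖y‖) • v) := by
  obtain ⟨ε, hε, hball⟩ :=
    Metric.nhds_basis_closedBall.mem_iff.1 (mem_interior_iff_mem_nhds.1 hv)
  refine ⟨ε⁻¹, inv_pos.2 hε, fun y => ?_⟩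
  rcases eq_or_ne y 0 with rfl | hy
  · simpa [coneLE] using hC.zero_mem (interior_subset hv)
  have hny : 0 < ‖y‖ := norm_pos_iff.2 hy
  have hmem : v - (ε / ‖y‖) • y ∈ C := hball (by
    rw [Metric.mem_closedBall, dist_eq_norm, sub_sub_cancel_left, norm_neg, norm_smul,
      Real.norm_of_nonneg (by positivity), div_mul_cancel₀ _ hny.ne'])
  have hscale : (ε⁻¹ * ‖y‖) * (ε / ‖y‖) = 1 := by field_simp
  simpa [coneLE, smul_sub, smul_smul, hscale] using
    hC.smul_mem (by positivity : 0 ≤ ε⁻¹ * ‖y‖) hmem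

theorem subsingleton_of_zero_mem_interior (h0 : (0 : E) ∈ interior C) : Subsingleton E := by
  obtain ⟨κ, -, hκ⟩ := hC.exists_coneLE_smul_of_mem_interior h0
  have hneg : ∀ y : E, -y ∈ C := fun y => by simpa [coneLE] using hκ y
  exact subsingleton_of_forall_eq 0 fun y =>
    hC.eq_zero_of_neg_mem (by simpa using hneg (-y)) (hneg y)

theorem le_mul_norm_of_smul_coneLE (hv : v ∈ C) (hv0 : v ≠ 0) {κ s : ℝ}
    (hκ : ∀ y, coneLE C y ((κ * ‖y‖) • v)) (h : coneLE C (s • v) y) : s ≤ κ * ‖y‖ :=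
  sub_nonneg.1 <| hC.nonneg_of_smul_mem hv hv0 <| by
    simpa [coneLE, sub_smul] using hC.coneLE_trans h (hκ y)

theorem coneLE_of_norm_sub_smul_le (hv : v ∈ C) {κ t d : ℝ} (hκ₀ : 0 ≤ κ)
    (hκ : ∀ y, coneLE C y ((κ * ‖y‖) • v)) (h : ‖x - t • v‖ ≤ d) :
    coneLE C x ((t + κ * d) • v) ∧ coneLE C ((t - κ * d) • v) x := by
  have hd : κ * ‖x - t • v‖ ≤ κ * d := mul_le_mul_of_nonneg_left h hκ₀
  constructor
  · have := hC.coneLE_trans (hκ (x - t • v)) (hC.smul_coneLE_smul hv hd)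
    unfold coneLE at this ⊢
    convert this using 1
    rw [add_smul]
    abel
  · have := hC.coneLE_trans (hκ (t • v - x)) (hC.smul_coneLE_smul hv (norm_sub_rev x _ ▸ hd))
    unfold coneLE at this ⊢
    convert this using 1
    rw [sub_smul]
    abel

theorem norm_sub_le_coneNorm_mul {g h : E → E}
    (hg : IsCompactMapOn C g) (hh : IsCompactMapOn C h) (hghom : IsHomog C g)
    (hhhom : IsHomog C h) (hy : y ∈ C) :
    ‖g y - h y‖ ≤ coneNorm C (fun x => g x - h x) * ‖y‖ := by
  rcases eq_or_ne y 0 with rfl | hy0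
  · simp [hghom.map_zero hy, hhhom.map_zero hy]
  have hny : 0 < ‖y‖ := norm_pos_iff.2 hy0
  have hunit := _root_.norm_sub_le_coneNorm hg hh (hC.smul_mem (inv_nonneg.2 hny.le) hy)
    (norm_smul_inv_norm (𝕜 := ℝ) hy0).le
  rw [hghom _ (inv_nonneg.2 hny.le) y hy, hhhom _ (inv_nonneg.2 hny.le) y hy, ← smul_sub,
    norm_smul, Real.norm_of_nonneg (inv_nonneg.2 hny.le), inv_mul_le_iff₀ hny] at hunit
  linarith

section Monotone

variable {g : E → E} (hgC : MapsTo g C C) (hghom : IsHomog C g) (hgord : IsOrdPres C g)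
include hgC hghom hgord

theorem iterate_coneLE_smul (hv : v ∈ C) {β c : ℝ} (hβ : 0 ≤ β) (hgv : coneLE C (g v) (β • v))
    (hx : x ∈ C) (hc : 0 ≤ c) (hxv : coneLE C x (c • v)) (n : ℕ) :
    coneLE C (g^[n] x) ((c * β ^ n) • v) := by
  induction n with
  | zero => simpa using hxv
  | succ n ih =>
    have hcn : 0 ≤ c * β ^ n := by positivity
    rw [Function.iterate_succ_apply']
    refine hC.coneLE_trans (hgord _ (hgC.iterate n hx) _ (hC.smul_mem hcn hv) ih) ?_
    rw [hghom _ hcn v hv, pow_succ, ← mul_assoc, mul_smul (c * β ^ n) β v]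
    exact hC.coneLE_smul hcn hgv

theorem pow_smul_coneLE_iterate (hv : v ∈ C) {ν : ℝ} (hν : 0 ≤ ν)
    (hgv : coneLE C (ν • v) (g v)) (n : ℕ) : coneLE C ((ν ^ n) • v) (g^[n] v) := by
  induction n with
  | zero => simpa [coneLE] using hC.zero_mem hv
  | succ n ih =>
    have hνn : 0 ≤ ν ^ n := by positivity
    rw [Function.iterate_succ_apply', pow_succ', mul_smul]
    refine hC.coneLE_trans ?_ (hgord _ (hC.smul_mem hνn hv) _ (hgC.iterate n hv) ih)
    rw [hghom _ hνn v hv, smul_comm]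
    exact hC.coneLE_smul hνn hgv

end Monotone

theorem tendsto_zero_of_coneLE_smul {K : Set E} (hK : IsCompact K) {y : ℕ → E} {t : ℕ → ℝ}
    (hyK : ∀ n, y n ∈ K) (hyC : ∀ n, y n ∈ C) (ht : Tendsto t atTop (𝓝 0))
    (hle : ∀ n, coneLE C (y n) (t n • v)) : Tendsto y atTop (𝓝 0) := by
  refine tendsto_of_subseq_tendsto fun ns hns => ?_
  obtain ⟨a, -, φ, hφ, hlim⟩ := hK.tendsto_subseq fun n => hyK (ns n)
  refine ⟨φ, ?_⟩
  have hsub : Tendsto (ns ∘ φ) atTop atTop := hns.comp hφ.tendsto_atTop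
  have haC : a ∈ C := hC.1.mem_of_tendsto hlim (.of_forall fun n => hyC _)
  have hneg : Tendsto (fun n => t (ns (φ n)) • v - y (ns (φ n))) atTop (𝓝 (-a)) := by
    simpa using ((ht.comp hsub).smul_const v).sub hlim
  have hnaC : -a ∈ C := hC.1.mem_of_tendsto hneg (.of_forall fun n => hle _)
  simpa [hC.eq_zero_of_neg_mem haC hnaC, Function.comp_def] using hlim

theorem exists_norm_le_add_mul_of_isCompact {K : Set E} (hK : IsCompact K) {ε : ℝ}
    (hε : 0 < ε) : ∃ R, 0 ≤ R ∧ ∀ y ∈ K, y ∈ C → ∀ r, 0 ≤ r → coneLE C y (r • v) →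
      ‖y‖ ≤ ε + R * r := by
  obtain ⟨M, hM⟩ := hK.isBounded.exists_norm_le
  by_contra! hbad
  choose y hyK hyC r hr hle hlt using fun n : ℕ => hbad (n + 1) (by positivity)
  have hrM : ∀ n, r n ≤ M / (n + 1) := fun n => by
    rw [le_div_iff₀ (by positivity)]
    nlinarith [hlt n, hM _ (hyK n)]
  have hr0 : Tendsto r atTop (𝓝 0) := by
    refine squeeze_zero hr hrM ?_
    simpa [Function.comp_def] using
      (tendsto_const_div_atTop_nhds_zero_nat M).comp (tendsto_add_atTop_nat 1)
  have hsmall := (hC.tendsto_zero_of_coneLE_smul hK hyK hyC hr0 hle).norm.eventually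
    (gt_mem_nhds (norm_zero (E := E) ▸ hε))
  obtain ⟨n, hn⟩ := hsmall.exists
  linarith [hlt n, mul_nonneg n.cast_add_one_pos.le (hr n)]

section Compact

variable {g : E → E} (hgC : MapsTo g C C) (hgcomp : IsCompactMapOn C g) (hghom : IsHomog C g)
include hgC hgcomp hghom

theorem exists_norm_apply_le {ε : ℝ} (hε : 0 < ε) :
    ∃ R, 0 ≤ R ∧ ∀ y ∈ C, ∀ r, 0 ≤ r → coneLE C (g y) (r • v) → ‖g y‖ ≤ ε * ‖y‖ + R * r := by
  set K := closure (g '' (C ∩ Metric.closedBall 0 1))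
  have hK : IsCompact K :=
    hgcomp _ inter_subset_left (Metric.isBounded_closedBall.subset inter_subset_right)
  obtain ⟨R, hR, hbound⟩ := hC.exists_norm_le_add_mul_of_isCompact (v := v) hK hε
  refine ⟨R, hR, fun y hy r hr hle => ?_⟩
  rcases eq_or_ne y 0 with rfl | hy0
  · rw [hghom.map_zero hy, norm_zero]
    positivity
  have hny : 0 < ‖y‖ := norm_pos_iff.2 hy0
  have hs : 0 ≤ ‖y‖⁻¹ := inv_nonneg.2 hny.le
  have hu : ‖y‖⁻¹ • y ∈ C ∩ Metric.closedBall 0 1 :=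
    ⟨hC.smul_mem hs hy, mem_closedBall_zero_iff.2 (norm_smul_inv_norm (𝕜 := ℝ) hy0).le⟩
  have hgu : g (‖y‖⁻¹ • y) = ‖y‖⁻¹ • g y := hghom _ hs y hy
  have hle' : coneLE C (g (‖y‖⁻¹ • y)) ((‖y‖⁻¹ * r) • v) := by
    rw [hgu, mul_smul]
    exact hC.coneLE_smul hs hle
  have key := hbound _ (subset_closure ⟨_, hu, rfl⟩) (hgC hu.1) _ (by positivity) hle'
  rw [hgu, norm_smul, Real.norm_of_nonneg hs] at key
  calc ‖g y‖ ≤ ‖y‖ * (ε + R * (‖y‖⁻¹ * r)) := (inv_mul_le_iff₀ hny).1 key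
    _ = ε * ‖y‖ + R * r := by field_simp

variable (hgord : IsOrdPres C g)
include hgord

/-- With `a n = ‖g^[n] x‖` one gets `a (n+1) ≤ (β/2) a n + R c β^(n+1)`, so `a n / β^n` stays
bounded. -/
theorem exists_norm_iterate_le_mul_pow (hv : v ∈ interior C) {β : ℝ} (hβ : 0 < β)
    (hgv : coneLE C (g v) (β • v)) {x : E} (hx : x ∈ C) :
    ∃ B, 0 < B ∧ ∀ n, ‖g^[n] x‖ ≤ B * β ^ n := by
  obtain ⟨κ, hκ, hunit⟩ := hC.exists_coneLE_smul_of_mem_interior hv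
  obtain ⟨R, hR, hnorm⟩ := hC.exists_norm_apply_le hgC hgcomp hghom (v := v) (half_pos hβ)
  set c := κ * ‖x‖
  have hc : 0 ≤ c := by positivity
  have horbit := hC.iterate_coneLE_smul hgC hghom hgord (interior_subset hv) hβ.le hgv hx hc
    (hunit x)
  set B := max ‖x‖ (2 * R * c) + 1
  refine ⟨B, by positivity, fun n => ?_⟩
  induction n with
  | zero =>
    simpa [B] using (le_max_left ‖x‖ (2 * R * c)).trans (le_add_of_nonneg_right zero_le_one)
  | succ n ih =>
    have hstep := hnorm _ (hgC.iterate n hx) _ (by positivity)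
      (Function.iterate_succ_apply' g n x ▸ horbit (n + 1))
    rw [← Function.iterate_succ_apply' g n x] at hstep
    have h2Rc : 2 * R * c ≤ B := (le_max_right _ _).trans (le_add_of_nonneg_right zero_le_one)
    calc ‖g^[n + 1] x‖ ≤ β / 2 * ‖g^[n] x‖ + R * c * β ^ (n + 1) := by
          simpa only [mul_assoc] using hstep
      _ ≤ β / 2 * (B * β ^ n) + B / 2 * β ^ (n + 1) := by gcongr; linarith
      _ = B * β ^ (n + 1) := by ring

theorem coneSpecRad_mem_Icc (hv : v ∈ interior C) (hv0 : v ≠ 0) {μ ν : ℝ} (hμ : 0 ≤ μ)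
    (hup : coneLE C (g v) (μ • v)) (hlo : coneLE C (ν • v) (g v)) :
    coneSpecRad C g ∈ Icc ν μ := by
  have hvC := interior_subset hv
  have hgrowth : ∀ β, μ < β → ∀ x ∈ C, ∃ B, 0 < B ∧ ∀ n, ‖g^[n] x‖ ≤ B * β ^ n :=
    fun β hβ x hx => hC.exists_norm_iterate_le_mul_pow hgC hgcomp hghom hgord hv
      (hμ.trans_lt hβ) (hC.coneLE_trans hup (hC.smul_coneLE_smul hvC hβ.le)) hx
  have hlimsup : ∀ x ∈ C, limsup (fun n : ℕ => ‖g^[n] x‖ ^ (n⁻¹ : ℝ)) atTop ≤ μ :=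
    fun x hx => le_of_forall_gt_imp_ge_of_dense fun β hβ => by
      obtain ⟨B, hB, hbound⟩ := hgrowth β hβ x hx
      exact limsup_rpow_inv_le (fun n => norm_nonneg _) hB (hμ.trans hβ.le) hbound
  have hbdd :
      BddAbove {r : ℝ | ∃ x ∈ C, r = limsup (fun k : ℕ => ‖g^[k] x‖ ^ ((k : ℝ)⁻¹)) atTop} :=
    ⟨μ, by rintro _ ⟨x, hx, rfl⟩; exact hlimsup x hx⟩
  refine ⟨?_, csSup_le ⟨_, v, hvC, rfl⟩ (by rintro _ ⟨x, hx, rfl⟩; exact hlimsup x hx)⟩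
  refine le_trans ?_ (le_csSup hbdd ⟨v, hvC, rfl⟩)
  wlog hν : 0 ≤ ν generalizing ν
  · exact (not_le.1 hν).le.trans (this (by simpa [coneLE] using hgC hvC) le_rfl)
  obtain ⟨κ, hκ, hunit⟩ := hC.exists_coneLE_smul_of_mem_interior hv
  obtain ⟨B, hB, hbound⟩ := hgrowth (μ + 1) (lt_add_one μ) v hvC
  refine le_limsup_rpow_inv (inv_pos.2 hκ) hν hB (by positivity) (fun n => ?_) hbound
  rw [inv_mul_le_iff₀ hκ]
  exact hC.le_mul_norm_of_smul_coneLE hvC hv0 hunit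
    (hC.pow_smul_coneLE_iterate hgC hghom hgord hvC hν hlo n)

end Compact

end IsClosedCone

end

theorem hasContinuousConeSpecRad_of_interior_eigenvector_general
    (C : Set X) (hC : IsClosedCone C)
    (f : X → X)
    (hfC : Set.MapsTo f C C)
    (hfcomp : IsCompactMapOn C f) (hfhom : IsHomog C f) (hford : IsOrdPres C f)
    (v : X) (hv : v ∈ interior C) (lam : ℝ) (hlam : 0 ≤ lam)
    (heig : f v = lam • v) :
    HasContinuousConeSpecRad C f := by
  intro fk hfkC _ hfkcomp hfkhom hfkord hlim
  rcases eq_or_ne v 0 with rfl | hv0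
  · have := hC.subsingleton_of_zero_mem_interior hv
    simp only [Subsingleton.elim _ f, tendsto_const_nhds_iff]
  have hvC := interior_subset hv
  obtain ⟨κ, hκ, hunit⟩ := hC.exists_coneLE_smul_of_mem_interior hv
  set ε := fun k => coneNorm C fun x => f x - fk k x
  have hmem : ∀ k,
      coneSpecRad C (fk k) ∈ Icc (lam - κ * (ε k * ‖v‖)) (lam + κ * (ε k * ‖v‖)) := by
    intro k
    have hdist : ‖fk k v - lam • v‖ ≤ ε k * ‖v‖ := by
      rw [← heig, norm_sub_rev]
      exact hC.norm_sub_le_coneNorm_mul hfcomp (hfkcomp k) hfhom (hfkhom k) hvC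
    obtain ⟨hup, hlo⟩ := hC.coneLE_of_norm_sub_smul_le hvC hκ.le hunit hdist
    have hgap_nonneg : 0 ≤ κ * (ε k * ‖v‖) := mul_nonneg hκ.le ((norm_nonneg _).trans hdist)
    exact hC.coneSpecRad_mem_Icc (hfkC k) (hfkcomp k) (hfkhom k) (hfkord k) hv hv0
      (hlam.trans (le_add_of_nonneg_right hgap_nonneg)) hup hlo
  have hf : coneSpecRad C f = lam := by
    have hrefl : coneLE C (f v) (lam • v) ∧ coneLE C (lam • v) (f v) := by
      simpa [coneLE, heig] using hC.zero_mem hvC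
    obtain ⟨hlo, hup⟩ := hC.coneSpecRad_mem_Icc hfC hfcomp hfhom hford hv hv0 hlam hrefl.1 hrefl.2
    exact le_antisymm hup hlo
  have hgap : Tendsto (fun k => κ * (ε k * ‖v‖)) atTop (𝓝 0) := by
    simpa using (hlim.mul_const ‖v‖).const_mul κ
  rw [hf]
  exact tendsto_of_tendsto_of_tendsto_of_le_of_le (by simpa using tendsto_const_nhds.sub hgap)
    (by simpa using tendsto_const_nhds.add hgap) (fun k => (hmem k).1) (fun k => (hmem k).2)

/-- If `f : C → C` is a continuous compact order-preserving homogeneous map on a closed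
cone `C` with non-empty interior and `f` has an eigenvector in the interior of `C`,
then `f` has a continuous cone spectral radius. -/
theorem hasContinuousConeSpecRad_of_interior_eigenvector
    (C : Set X) (hC : IsClosedCone C) (hint : (interior C).Nonempty)
    (f : X → X)
    (hfC : Set.MapsTo f C C) (hfcont : ContinuousOn f C)
    (hfcomp : IsCompactMapOn C f) (hfhom : IsHomog C f) (hford : IsOrdPres C f)
    (v : X) (hv : v ∈ interior C) (lam : ℝ) (hlam : 0 ≤ lam)
    (heig : f v = lam • v) :
    HasContinuousConeSpecRad C f :=
  hasContinuousConeSpecRad_of_interior_eigenvector_general C hC f hfC hfcomp hfhom hford v hv lam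
    hlam heig
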